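/- Let ω be a triangular weight on the Grigorchuk group, i.e., ω(x) ≤ ω(y) + ω(z) for every ordering (x,y,z) of {b,c,d}. Then every element g ∈ G admits a minimal-weight representative word of the form [*]a*a*a⋯*a[*], where each * ∈ {b,c,d}, letters a and elements of {b,c,d} alternate, and the initial and final * are optional. -/

import Mathlib

/-- The generator `a` of the Grigorchuk group, acting on finite binary sequences. -/
def grigA : List Bool → List Bool
  | [] => []
  | x :: σ => (!x) :: σ

mutual
  /-- The generator `b` of the Grigorchuk group. -/
  def grigB : List Bool → List Bool
    | [] => []
    | false :: σ => false :: grigA σ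
    | true :: σ => true :: grigC σ
  /-- The generator `c` of the Grigorchuk group. -/
  def grigC : List Bool → List Bool
    | [] => []
    | false :: σ => false :: grigA σ
    | true :: σ => true :: grigD σ
  /-- The generator `d` of the Grigorchuk group. -/
  def grigD : List Bool → List Bool
    | [] => []
    | false :: σ => false :: σ
    | true :: σ => true :: grigB σ
end

theorem grigA_involutive : Function.Involutive grigA := by
  intro l
  rcases l with _ | ⟨x, σ⟩
  · rfl
  · cases x <;> rfl

theorem grigBCD_involutive :
    ∀ l : List Bool, grigB (grigB l) = l ∧ grigC (grigC l) = l ∧ grigD (grigD l) = l := by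
  intro l
  induction l with
  | nil => exact ⟨rfl, rfl, rfl⟩
  | cons x σ ih =>
      cases x <;>
        simp [grigB, grigC, grigD, grigA_involutive σ, ih.1, ih.2.1, ih.2.2]

theorem grigB_involutive : Function.Involutive grigB := fun l => (grigBCD_involutive l).1
theorem grigC_involutive : Function.Involutive grigC := fun l => (grigBCD_involutive l).2.1
theorem grigD_involutive : Function.Involutive grigD := fun l => (grigBCD_involutive l).2.2

/-- The generator `a` as a permutation of binary sequences. -/
def aP : Equiv.Perm (List Bool) := grigA_involutive.toPerm
/-- The generator `b` as a permutation of binary sequences. -/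
def bP : Equiv.Perm (List Bool) := grigB_involutive.toPerm
/-- The generator `c` as a permutation of binary sequences. -/
def cP : Equiv.Perm (List Bool) := grigC_involutive.toPerm
/-- The generator `d` as a permutation of binary sequences. -/
def dP : Equiv.Perm (List Bool) := grigD_involutive.toPerm

/-- The Grigorchuk group, as the group of permutations of finite binary sequences
generated by `a`, `b`, `c`, `d`. -/
def Grig : Subgroup (Equiv.Perm (List Bool)) := Subgroup.closure {aP, bP, cP, dP}

/-- `a` as an element of the Grigorchuk group. -/
def ga : Grig := ⟨aP, Subgroup.subset_closure (by simp)⟩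
/-- `b` as an element of the Grigorchuk group. -/
def gb : Grig := ⟨bP, Subgroup.subset_closure (by simp)⟩
/-- `c` as an element of the Grigorchuk group. -/
def gc : Grig := ⟨cP, Subgroup.subset_closure (by simp)⟩
/-- `d` as an element of the Grigorchuk group. -/
def gd : Grig := ⟨dP, Subgroup.subset_closure (by simp)⟩

/-- A permutation of binary sequences preserves the first letter. -/
def FixesFirst (g : Equiv.Perm (List Bool)) : Prop :=
  ∀ (x : Bool) (σ : List Bool), ∃ σ' : List Bool, g (x :: σ) = x :: σ'
/-- The weight (norm) on a group `G` induced by a weight function `ω` on a generating set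
`S`: the infimum of the total weights of words over `S` representing `g`. -/
noncomputable def wordWeight {G : Type*} [Group G] (S : Set G) (ω : G → ℝ) (g : G) : ℝ :=
  sInf ((fun l : List G => (l.map ω).sum) '' {l : List G | (∀ s ∈ l, s ∈ S) ∧ l.prod = g})

/-- The growth function of `G` with respect to the generating set `S` and weight `ω`:
the number of elements of weight at most `x`. -/
noncomputable def growth {G : Type*} [Group G] (S : Set G) (ω : G → ℝ) (x : ℝ) : ℕ :=
  Nat.card {g : G | wordWeight S ω g ≤ x}

/-- The word length of `g` with respect to the generating set `S`. -/
noncomputable def wordLength {G : Type*} [Group G] (S : Set G) (g : G) : ℕ :=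
  sInf {n : ℕ | ∃ l : List G, (∀ s ∈ l, s ∈ S) ∧ l.prod = g ∧ l.length = n}

/-!
Rewriting a word from the right, cancelling `xx` and contracting two adjacent letters of
`{b, c, d}` to the third one (the Klein four-group relations), yields a word in which `a`
alternates with letters of `{b, c, d}`. It represents the same element and, by positivity and the
triangle inequality for `ω`, it is no heavier. Applied to a word of minimal weight, which exists
because only finitely many words over a finite alphabet of positive weights are lighter than a
given one, it produces a minimal word of alternating form.
-/

section WordWeight

variable {α : Type*} {S : Set α} {ω : α → ℝ}

theorem exists_pos_le_of_finite (hS : S.Finite) (hω : ∀ s ∈ S, 0 < ω s) :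
    ∃ δ > 0, ∀ s ∈ S, δ ≤ ω s := by
  rcases S.eq_empty_or_nonempty with rfl | hne
  · exact ⟨1, one_pos, by simp⟩
  · obtain ⟨s₀, hs₀, hmin⟩ := S.exists_min_image ω hS hne
    exact ⟨ω s₀, hω s₀ hs₀, hmin⟩

theorem length_mul_le_sum {δ : ℝ} (hδ : ∀ s ∈ S, δ ≤ ω s) {l : List α}
    (hl : ∀ s ∈ l, s ∈ S) :
    l.length * δ ≤ (l.map ω).sum := by
  simpa [mul_comm] using
    List.card_nsmul_le_sum (l.map ω) δ (by simpa using fun s hs => hδ s (hl s hs))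

theorem finite_setOf_sum_le (hS : S.Finite) (hω : ∀ s ∈ S, 0 < ω s) (C : ℝ) :
    {l : List α | (∀ s ∈ l, s ∈ S) ∧ (l.map ω).sum ≤ C}.Finite := by
  have : Finite S := hS
  obtain ⟨δ, hδ, hδS⟩ := exists_pos_le_of_finite hS hω
  obtain ⟨N, hN⟩ := exists_nat_ge (C / δ)
  refine ((List.finite_length_le S N).image (List.map (↑))).subset ?_
  rintro l ⟨hlS, hlC⟩
  have hlen : (l.length : ℝ) ≤ N := by
    rw [div_le_iff₀ hδ] at hN
    exact le_of_mul_le_mul_right ((length_mul_le_sum hδS hlS).trans (hlC.trans hN)) hδ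
  lift l to List S using hlS
  exact ⟨l, by simpa using hlen, rfl⟩

variable {G : Type*} [Group G] {S : Set G} {ω : G → ℝ}

theorem exists_list_prod_eq_of_isOfFinOrder (hS : ∀ s ∈ S, IsOfFinOrder s) {g : G}
    (hg : g ∈ Subgroup.closure S) : ∃ l : List G, (∀ s ∈ l, s ∈ S) ∧ l.prod = g := by
  rw [← Subgroup.mem_toSubmonoid, Subgroup.closure_toSubmonoid_of_isOfFinOrder hS] at hg
  exact Submonoid.exists_list_of_mem_closure hg

theorem wordWeight_le_sum (hω : ∀ s ∈ S, 0 ≤ ω s) {l : List G} (hl : ∀ s ∈ l, s ∈ S) :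
    wordWeight S ω l.prod ≤ (l.map ω).sum := by
  refine csInf_le ⟨0, ?_⟩ ⟨l, ⟨hl, rfl⟩, rfl⟩
  rintro _ ⟨u, ⟨hu, -⟩, rfl⟩
  exact List.sum_nonneg (by simpa using fun s hs => hω s (hu s hs))

theorem exists_sum_eq_wordWeight (hS : S.Finite) (hω : ∀ s ∈ S, 0 < ω s) {g : G}
    (hg : ∃ l : List G, (∀ s ∈ l, s ∈ S) ∧ l.prod = g) :
    ∃ l : List G, (∀ s ∈ l, s ∈ S) ∧ l.prod = g ∧
      (l.map ω).sum = wordWeight S ω g := by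
  obtain ⟨l₀, hl₀S, hl₀g⟩ := hg
  set C := (l₀.map ω).sum
  obtain ⟨l, ⟨⟨hlS, -⟩, hlg⟩, hmin⟩ :=
    Set.exists_min_image _ (fun l => (l.map ω).sum)
      ((finite_setOf_sum_le hS hω C).inter_of_left {l | l.prod = g})
      ⟨l₀, ⟨hl₀S, le_rfl⟩, hl₀g⟩
  have hl_le : ∀ u : List G, (∀ s ∈ u, s ∈ S) → u.prod = g →
      (l.map ω).sum ≤ (u.map ω).sum := by
    intro u huS hug
    by_cases huC : (u.map ω).sum ≤ C
    · exact hmin u ⟨⟨huS, huC⟩, hug⟩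
    · exact (hmin l₀ ⟨⟨hl₀S, le_rfl⟩, hl₀g⟩).trans (not_le.mp huC).le
  refine ⟨l, hlS, hlg, le_antisymm ?_ ?_⟩
  · refine le_csInf ⟨_, l₀, ⟨hl₀S, hl₀g⟩, rfl⟩ ?_
    rintro _ ⟨u, ⟨huS, hug⟩, rfl⟩
    exact hl_le u huS hug
  · exact hlg ▸ wordWeight_le_sum (fun s hs => (hω s hs).le) hlS

end WordWeight

namespace Grigorchuk

theorem grigBCD_mul_rels (l : List Bool) :
    grigB (grigC l) = grigD l ∧ grigC (grigB l) = grigD l ∧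
    grigB (grigD l) = grigC l ∧ grigD (grigB l) = grigC l ∧
    grigC (grigD l) = grigB l ∧ grigD (grigC l) = grigB l := by
  induction l with
  | nil => exact ⟨rfl, rfl, rfl, rfl, rfl, rfl⟩
  | cons x σ ih =>
      obtain ⟨h₁, h₂, h₃, h₄, h₅, h₆⟩ := ih
      cases x <;>
        simp [grigB, grigC, grigD, grigA_involutive σ, h₁, h₂, h₃, h₄, h₅, h₆]

@[simp] theorem ga_mul_ga : ga * ga = 1 := Subtype.ext (Equiv.ext grigA_involutive)
@[simp] theorem gb_mul_gb : gb * gb = 1 := Subtype.ext (Equiv.ext grigB_involutive)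
@[simp] theorem gc_mul_gc : gc * gc = 1 := Subtype.ext (Equiv.ext grigC_involutive)
@[simp] theorem gd_mul_gd : gd * gd = 1 := Subtype.ext (Equiv.ext grigD_involutive)
@[simp] theorem gb_mul_gc : gb * gc = gd :=
  Subtype.ext (Equiv.ext fun l => (grigBCD_mul_rels l).1)
@[simp] theorem gc_mul_gb : gc * gb = gd :=
  Subtype.ext (Equiv.ext fun l => (grigBCD_mul_rels l).2.1)
@[simp] theorem gb_mul_gd : gb * gd = gc :=
  Subtype.ext (Equiv.ext fun l => (grigBCD_mul_rels l).2.2.1)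
@[simp] theorem gd_mul_gb : gd * gb = gc :=
  Subtype.ext (Equiv.ext fun l => (grigBCD_mul_rels l).2.2.2.1)
@[simp] theorem gc_mul_gd : gc * gd = gb :=
  Subtype.ext (Equiv.ext fun l => (grigBCD_mul_rels l).2.2.2.2.1)
@[simp] theorem gd_mul_gc : gd * gc = gb :=
  Subtype.ext (Equiv.ext fun l => (grigBCD_mul_rels l).2.2.2.2.2)

theorem closure_generators : Subgroup.closure ({ga, gb, gc, gd} : Set Grig) = ⊤ := by
  have h : ((↑) : Grig → Equiv.Perm (List Bool)) ⁻¹' {aP, bP, cP, dP} =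
      {ga, gb, gc, gd} := by
    ext x
    simp [ga, gb, gc, gd, Subtype.ext_iff]
  rw [← h]
  exact Subgroup.closure_closure_coe_preimage

theorem exists_list_prod_eq (g : Grig) :
    ∃ l : List Grig, (∀ s ∈ l, s ∈ ({ga, gb, gc, gd} : Set Grig)) ∧ l.prod = g := by
  refine exists_list_prod_eq_of_isOfFinOrder (fun s hs => ?_)
    (closure_generators ▸ Subgroup.mem_top g)
  refine isOfFinOrder_iff_pow_eq_one.mpr ⟨2, two_pos, ?_⟩
  rcases hs with rfl | rfl | rfl | rfl <;> simp [sq]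

inductive Letter
  | a | b | c | d

def Letter.toGrig : Letter → Grig
  | .a => ga | .b => gb | .c => gc | .d => gd

instance : CanLift Grig Letter Letter.toGrig (· ∈ ({ga, gb, gc, gd} : Set Grig)) where
  prf x hx := by
    rcases hx with rfl | rfl | rfl | rfl
    exacts [⟨.a, rfl⟩, ⟨.b, rfl⟩, ⟨.c, rfl⟩, ⟨.d, rfl⟩]

theorem Letter.toGrig_mem (x : Letter) : x.toGrig ∈ ({ga, gb, gc, gd} : Set Grig) := by
  cases x <;> simp [Letter.toGrig]

def consReduce : Letter → List Letter → List Letter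
  | .a, .a :: t => t
  | .b, .b :: t | .c, .c :: t | .d, .d :: t => t
  | .b, .c :: t | .c, .b :: t => .d :: t
  | .b, .d :: t | .d, .b :: t => .c :: t
  | .c, .d :: t | .d, .c :: t => .b :: t
  | x, t => x :: t

def reduce (l : List Letter) : List Letter := l.foldr consReduce []

def Alternating (x y : Letter) : Prop := Xor (x = .a) (y = .a)

theorem prod_map_consReduce (x : Letter) (t : List Letter) :
    ((consReduce x t).map Letter.toGrig).prod = x.toGrig * (t.map Letter.toGrig).prod := by
  rcases t with _ | ⟨y, t⟩
  · cases x <;> simp [consReduce]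
  · cases x <;> cases y <;> simp [consReduce, Letter.toGrig, ← mul_assoc]

theorem prod_map_reduce (l : List Letter) :
    ((reduce l).map Letter.toGrig).prod = (l.map Letter.toGrig).prod := by
  induction l with
  | nil => rfl
  | cons x t ih => simp [reduce, prod_map_consReduce, ← ih]

theorem isChain_consReduce (x : Letter) {t : List Letter} (ht : t.IsChain Alternating) :
    (consReduce x t).IsChain Alternating := by
  rcases t with _ | ⟨y, _ | ⟨z, t⟩⟩
  · simp [consReduce]
  · cases x <;> cases y <;> simp [consReduce, Alternating]
  · cases x <;> cases y <;> cases z <;> simp_all [consReduce, Alternating]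

theorem isChain_reduce (l : List Letter) : (reduce l).IsChain Alternating := by
  induction l with
  | nil => exact .nil
  | cons x t ih => exact isChain_consReduce x ih

theorem Alternating.toGrig {x y : Letter} (h : Alternating x y) :
    (x.toGrig = ga ∧ y.toGrig ∈ ({gb, gc, gd} : Set Grig)) ∨
      (x.toGrig ∈ ({gb, gc, gd} : Set Grig) ∧ y.toGrig = ga) := by
  cases x <;> cases y <;> simp_all [Alternating, Letter.toGrig]

def IsTriangular (ω : Grig → ℝ) : Prop :=
  ω gb ≤ ω gc + ω gd ∧ ω gc ≤ ω gb + ω gd ∧ ω gd ≤ ω gb + ω gc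

theorem sum_map_consReduce_le {ω : Grig → ℝ} (hω : ∀ x : Letter, 0 ≤ ω x.toGrig)
    (htri : IsTriangular ω)
    (x : Letter) (t : List Letter) :
    ((consReduce x t).map (ω ∘ Letter.toGrig)).sum ≤
      ω x.toGrig + (t.map (ω ∘ Letter.toGrig)).sum := by
  obtain ⟨hb, hc, hd⟩ := htri
  have hω_nonneg : 0 ≤ ω ga ∧ 0 ≤ ω gb ∧ 0 ≤ ω gc ∧ 0 ≤ ω gd :=
    ⟨hω .a, hω .b, hω .c, hω .d⟩
  rcases t with _ | ⟨y, t⟩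
  · simp [consReduce]
  · cases x <;> cases y <;> simp [consReduce, Letter.toGrig] <;> linarith

theorem sum_map_reduce_le {ω : Grig → ℝ} (hω : ∀ x : Letter, 0 ≤ ω x.toGrig)
    (htri : IsTriangular ω)
    (l : List Letter) :
    ((reduce l).map (ω ∘ Letter.toGrig)).sum ≤ (l.map (ω ∘ Letter.toGrig)).sum := by
  induction l with
  | nil => rfl
  | cons x t ih =>
    exact (sum_map_consReduce_le hω htri x (reduce t)).trans (by simpa using ih)

end Grigorchuk

open Grigorchuk

/-- For a triangular weight `ω` on the Grigorchuk group (i.e. each of `ω(b), ω(c), ω(d)`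
is at most the sum of the other two), every element admits a minimal-weight representative
word over `{a, b, c, d}` in which the letter `a` alternates with letters from
`{b, c, d}` (the form `[*]a*a*a⋯*a[*]`). -/
theorem grigorchuk_minimal_alternating_form
    (ω : Grig → ℝ) (hω : ∀ s ∈ ({ga, gb, gc, gd} : Set Grig), 0 < ω s)
    (htri : ω gb ≤ ω gc + ω gd ∧ ω gc ≤ ω gb + ω gd ∧ ω gd ≤ ω gb + ω gc) :
    ∀ g : Grig, ∃ l : List Grig,
      (∀ s ∈ l, s ∈ ({ga, gb, gc, gd} : Set Grig)) ∧
      l.prod = g ∧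
      (l.map ω).sum = wordWeight ({ga, gb, gc, gd} : Set Grig) ω g ∧
      List.Chain' (fun x y =>
        (x = ga ∧ y ∈ ({gb, gc, gd} : Set Grig)) ∨
        (x ∈ ({gb, gc, gd} : Set Grig) ∧ y = ga)) l := by
  intro g
  obtain ⟨l, hlS, hlg, hl_min⟩ :=
    exists_sum_eq_wordWeight (Set.toFinite _) hω (exists_list_prod_eq g)
  lift l to List Letter using hlS
  have hS : ∀ s ∈ (reduce l).map Letter.toGrig, s ∈ ({ga, gb, gc, gd} : Set Grig) := by
    simpa using fun x _ => x.toGrig_mem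
  refine ⟨(reduce l).map Letter.toGrig, hS, by rw [prod_map_reduce, hlg], le_antisymm ?_ ?_, ?_⟩
  · simpa [← hl_min] using sum_map_reduce_le (fun x => (hω _ x.toGrig_mem).le) htri l
  · simpa [prod_map_reduce, hlg] using wordWeight_le_sum (fun s hs => (hω s hs).le) hS
  · exact List.isChain_map_of_isChain _ (fun _ _ => Alternating.toGrig) (isChain_reduce l)
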